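/- arXiv:0812.3948 — 3 statements merged into one kernel-verified Lean document; each statement's English description precedes it below -/
import Mathlib

section
/- Let f⁺, f⁻ : V → ℝ be Fréchet-differentiable on a normed space V with f⁺(ξ) ≠ f⁻(ξ) at every point of an open set U, and let F = −c·f⁺f⁻/(f⁺−f⁻) with c ≠ 0. Suppose ξ ∈ U is a critical point of F with F(ξ) = 0. Then exactly one of f⁺(ξ), f⁻(ξ) is zero, and ξ is a critical point of that function (f⁺ if f⁺(ξ)=0, f⁻ if f⁻(ξ)=0). -/
/-! Since `F(ξ) = 0` and `f⁺(ξ) ≠ f⁻(ξ)`, one factor vanishes at `ξ`, say `f⁺(ξ) = 0`; the other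
is then nonzero. Writing `F = f⁺ · g` with `g = -c f⁻ / (f⁺ - f⁻)`, differentiable at `ξ` with
`g(ξ) = c ≠ 0`, the product rule gives `DF(ξ) = c · Df⁺(ξ)`, so `Df⁺(ξ) = 0`. The case `f⁻(ξ) = 0`
is the same after swapping the factors and replacing `c` by `-c`. -/

section FactorAtZero

variable {𝕜 V : Type*} [NontriviallyNormedField 𝕜] [NormedAddCommGroup V] [NormedSpace 𝕜 V]

theorem fderiv_mul_of_apply_eq_zero {f g : V → 𝕜} {ξ : V} (hf : DifferentiableAt 𝕜 f ξ)
    (hg : DifferentiableAt 𝕜 g ξ) (hf0 : f ξ = 0) :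
    fderiv 𝕜 (f * g) ξ = g ξ • fderiv 𝕜 f ξ := by
  ext v
  simp [fderiv_mul hf hg, hf0]

theorem fderiv_eq_zero_of_fderiv_mul_eq_zero {f g : V → 𝕜} {ξ : V}
    (hf : DifferentiableAt 𝕜 f ξ) (hg : DifferentiableAt 𝕜 g ξ) (hf0 : f ξ = 0) (hg0 : g ξ ≠ 0)
    (hcrit : fderiv 𝕜 (f * g) ξ = 0) : fderiv 𝕜 f ξ = 0 := by
  rw [fderiv_mul_of_apply_eq_zero hf hg hf0] at hcrit
  exact (smul_eq_zero.mp hcrit).resolve_left hg0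

end FactorAtZero

section FactorisedLagrangian

variable {V : Type*} [NormedAddCommGroup V] [NormedSpace ℝ V]

theorem fderiv_eq_zero_of_factorised_critical_point {fp fm F : V → ℝ} {c : ℝ} {ξ : V}
    (hfp : DifferentiableAt ℝ fp ξ) (hfm : DifferentiableAt ℝ fm ξ) (hc : c ≠ 0)
    (hne : fp ξ ≠ fm ξ) (hF : ∀ x, F x = -c * (fp x * fm x) / (fp x - fm x))
    (hcrit : fderiv ℝ F ξ = 0) (hp0 : fp ξ = 0) : fm ξ ≠ 0 ∧ fderiv ℝ fp ξ = 0 := by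
  have hm0 : fm ξ ≠ 0 := fun hm0 => hne (hp0.trans hm0.symm)
  set g : V → ℝ := fun x => -c * fm x / (fp x - fm x)
  have hFg : F = fp * g := funext fun x => by simp only [hF, g, Pi.mul_apply]; ring
  have hg : DifferentiableAt ℝ g ξ := by
    fun_prop (disch := exact sub_ne_zero.mpr hne)
  have hgξ : g ξ = c := by simp only [g, hp0]; field_simp; ring
  refine ⟨hm0, fderiv_eq_zero_of_fderiv_mul_eq_zero hfp hg hp0 (hgξ ▸ hc) ?_⟩
  rwa [← hFg]

end FactorisedLagrangian

theorem factorised_lagrangian_critical_point_general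
    {V : Type*} [NormedAddCommGroup V] [NormedSpace ℝ V]
    (fp fm : V → ℝ) (hfp : Differentiable ℝ fp) (hfm : Differentiable ℝ fm)
    (c : ℝ) (hc : c ≠ 0)
    (U : Set V) (hne : ∀ x ∈ U, fp x ≠ fm x)
    (F : V → ℝ) (hF : ∀ x, F x = -c * (fp x * fm x) / (fp x - fm x))
    (ξ : V) (hξ : ξ ∈ U) (hF0 : F ξ = 0) (hcrit : fderiv ℝ F ξ = 0) :
    (fp ξ = 0 ∧ fm ξ ≠ 0 ∧ fderiv ℝ fp ξ = 0) ∨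
      (fm ξ = 0 ∧ fp ξ ≠ 0 ∧ fderiv ℝ fm ξ = 0) := by
  have hneξ : fp ξ ≠ fm ξ := hne ξ hξ
  have hF' : ∀ x, F x = -(-c) * (fm x * fp x) / (fm x - fp x) := fun x => by
    rw [hF, ← neg_sub (fp x), div_neg]; ring
  have hprod : fp ξ * fm ξ = 0 := by simpa [hF, hc, sub_ne_zero.mpr hneξ] using hF0
  rcases mul_eq_zero.mp hprod with hp0 | hm0
  · exact Or.inl ⟨hp0, fderiv_eq_zero_of_factorised_critical_point (hfp ξ) (hfm ξ) hc hneξ hF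
      hcrit hp0⟩
  · exact Or.inr ⟨hm0, fderiv_eq_zero_of_factorised_critical_point (hfm ξ) (hfp ξ)
      (neg_ne_zero.mpr hc) hneξ.symm hF' hcrit hm0⟩

/-- A critical point of the factorised Lagrangian with zero value is a critical point of
exactly one of the two factors. -/
theorem factorised_lagrangian_critical_point
    {V : Type*} [NormedAddCommGroup V] [NormedSpace ℝ V]
    (fp fm : V → ℝ) (hfp : Differentiable ℝ fp) (hfm : Differentiable ℝ fm)
    (c : ℝ) (hc : c ≠ 0)
    (U : Set V) (hU : IsOpen U) (hne : ∀ x ∈ U, fp x ≠ fm x)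
    (F : V → ℝ) (hF : ∀ x, F x = -c * (fp x * fm x) / (fp x - fm x))
    (ξ : V) (hξ : ξ ∈ U) (hF0 : F ξ = 0) (hcrit : fderiv ℝ F ξ = 0) :
    (fp ξ = 0 ∧ fm ξ ≠ 0 ∧ fderiv ℝ fp ξ = 0) ∨
      (fm ξ = 0 ∧ fp ξ ≠ 0 ∧ fderiv ℝ fm ξ = 0) :=
  factorised_lagrangian_critical_point_general fp fm hfp hfm c hc U hne F hF ξ hξ hF0 hcrit
end

section
/- Let ϑ¹+iϑ² be a complex-valued covector field on a 4-manifold M, extended to the 5-manifold M×S¹ (coordinate x⁴) by 𝛝¹+i𝛝² = (ϑ¹+iϑ²)·e^{−2imx⁴} (with zero x⁴-component), and let 𝛝⁴ = dx⁴. Then 𝛝¹∧d𝛝¹ + 𝛝²∧d𝛝² = ϑ¹∧dϑ¹ + ϑ²∧dϑ² − 4m·ϑ¹∧ϑ²∧𝛝⁴, where the right-hand-side 4-dimensional forms are pulled back to the 5-manifold. -/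
lemma fderiv_coef_mul
    {E : Type*} [NormedAddCommGroup E] [NormedSpace ℝ E]
    (θ1 θ2 : E → E → ℝ)
    (hθ1 : ∀ v, Differentiable ℝ (fun x => θ1 x v))
    (hθ2 : ∀ v, Differentiable ℝ (fun x => θ2 x v))
    (f g : ℝ → ℝ) (p : E × ℝ) (f' g' : ℝ)
    (hf : HasDerivAt f f' p.2) (hg : HasDerivAt g g' p.2)
    (w : E) (u : E × ℝ) :
    fderiv ℝ (fun q : E × ℝ => f q.2 * θ1 q.1 w + g q.2 * θ2 q.1 w) p u =
      f p.2 * fderiv ℝ (fun x => θ1 x w) p.1 u.1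
      + g p.2 * fderiv ℝ (fun x => θ2 x w) p.1 u.1
      + f' * u.2 * θ1 p.1 w + g' * u.2 * θ2 p.1 w := by
  have h1 : HasFDerivAt (fun q : E × ℝ => θ1 q.1 w)
      ((fderiv ℝ (fun x => θ1 x w) p.1).comp (ContinuousLinearMap.fst ℝ E ℝ)) p :=
    ((hθ1 w p.1).hasFDerivAt).comp p (hasFDerivAt_fst)
  have h2 : HasFDerivAt (fun q : E × ℝ => θ2 q.1 w)
      ((fderiv ℝ (fun x => θ2 x w) p.1).comp (ContinuousLinearMap.fst ℝ E ℝ)) p :=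
    ((hθ2 w p.1).hasFDerivAt).comp p (hasFDerivAt_fst)
  have hf2 : HasFDerivAt (fun q : E × ℝ => f q.2)
      (f' • ContinuousLinearMap.snd ℝ E ℝ) p :=
    hf.comp_hasFDerivAt p (hasFDerivAt_snd)
  have hg2 : HasFDerivAt (fun q : E × ℝ => g q.2)
      (g' • ContinuousLinearMap.snd ℝ E ℝ) p :=
    hg.comp_hasFDerivAt p (hasFDerivAt_snd)
  have H : fderiv ℝ (fun q : E × ℝ => f q.2 * θ1 q.1 w + g q.2 * θ2 q.1 w) p = _ :=
    ((hf2.mul h1).add (hg2.mul h2)).fderiv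
  rw [H]
  simp [ContinuousLinearMap.add_apply, ContinuousLinearMap.smul_apply,
    ContinuousLinearMap.comp_apply, smul_eq_mul]
  ring


/-- Kaluza–Klein separation of variables: the rotated extended coframe pair satisfies
𝛝¹∧d𝛝¹ + 𝛝²∧d𝛝² = ϑ¹∧dϑ¹ + ϑ²∧dϑ² − 4m·ϑ¹∧ϑ²∧𝛝⁴. -/
theorem kaluza_klein_separation
    {E : Type*} [NormedAddCommGroup E] [NormedSpace ℝ E]
    (θ1 θ2 : E → E → ℝ)
    (hθ1 : ∀ v, Differentiable ℝ (fun x => θ1 x v))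
    (hθ2 : ∀ v, Differentiable ℝ (fun x => θ2 x v))
    (m : ℝ)
    (Θ1 Θ2 Θ4 bθ1 bθ2 : E × ℝ → E × ℝ → ℝ)
    (hΘ1 : ∀ p v, Θ1 p v = θ1 p.1 v.1)
    (hΘ2 : ∀ p v, Θ2 p v = θ2 p.1 v.1)
    (hΘ4 : ∀ p v, Θ4 p v = v.2)
    (hb1 : ∀ p v, bθ1 p v =
      Real.cos (2 * m * p.2) * θ1 p.1 v.1 + Real.sin (2 * m * p.2) * θ2 p.1 v.1)
    (hb2 : ∀ p v, bθ2 p v =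
      -Real.sin (2 * m * p.2) * θ1 p.1 v.1 + Real.cos (2 * m * p.2) * θ2 p.1 v.1)
    (d1 : (E × ℝ → E × ℝ → ℝ) → E × ℝ → E × ℝ → E × ℝ → ℝ)
    (hd1 : ∀ α p u v, d1 α p u v =
      fderiv ℝ (fun q => α q v) p u - fderiv ℝ (fun q => α q u) p v)
    (w12 : (E × ℝ → E × ℝ → ℝ) → (E × ℝ → E × ℝ → E × ℝ → ℝ) →
      E × ℝ → E × ℝ → E × ℝ → E × ℝ → ℝ)
    (hw12 : ∀ α ω p v0 v1 v2, w12 α ω p v0 v1 v2 =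
      α p v0 * ω p v1 v2 - α p v1 * ω p v0 v2 + α p v2 * ω p v0 v1)
    (w3 : (E × ℝ → E × ℝ → ℝ) → (E × ℝ → E × ℝ → ℝ) → (E × ℝ → E × ℝ → ℝ) →
      E × ℝ → E × ℝ → E × ℝ → E × ℝ → ℝ)
    (hw3 : ∀ α β γ p v0 v1 v2, w3 α β γ p v0 v1 v2 = Matrix.det
      !![α p v0, α p v1, α p v2; β p v0, β p v1, β p v2; γ p v0, γ p v1, γ p v2]) :
    ∀ p v0 v1 v2,
      w12 bθ1 (d1 bθ1) p v0 v1 v2 + w12 bθ2 (d1 bθ2) p v0 v1 v2 =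
      w12 Θ1 (d1 Θ1) p v0 v1 v2 + w12 Θ2 (d1 Θ2) p v0 v1 v2
        - 4 * m * w3 Θ1 Θ2 Θ4 p v0 v1 v2 := by
  intro p v0 v1 v2
  have h2m : ∀ x : ℝ, HasDerivAt (fun y : ℝ => 2 * m * y) (2 * m) x := by
    intro x
    simpa using (hasDerivAt_id x).const_mul (2 * m)
  have hcos : ∀ x : ℝ, HasDerivAt (fun y : ℝ => Real.cos (2 * m * y))
      (-Real.sin (2 * m * x) * (2 * m)) x := fun x =>
    (Real.hasDerivAt_cos (2 * m * x)).comp x (h2m x)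
  have hsin : ∀ x : ℝ, HasDerivAt (fun y : ℝ => Real.sin (2 * m * y))
      (Real.cos (2 * m * x) * (2 * m)) x := fun x =>
    (Real.hasDerivAt_sin (2 * m * x)).comp x (h2m x)
  have hnsin : ∀ x : ℝ, HasDerivAt (fun y : ℝ => -Real.sin (2 * m * y))
      (-(Real.cos (2 * m * x) * (2 * m))) x := fun x => (hsin x).neg
  have key1 : ∀ (w : E) (u : E × ℝ),
      fderiv ℝ (fun q : E × ℝ =>
        Real.cos (2 * m * q.2) * θ1 q.1 w + Real.sin (2 * m * q.2) * θ2 q.1 w) p u =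
      Real.cos (2 * m * p.2) * fderiv ℝ (fun x => θ1 x w) p.1 u.1
      + Real.sin (2 * m * p.2) * fderiv ℝ (fun x => θ2 x w) p.1 u.1
      + (-Real.sin (2 * m * p.2) * (2 * m)) * u.2 * θ1 p.1 w
      + (Real.cos (2 * m * p.2) * (2 * m)) * u.2 * θ2 p.1 w := fun w u =>
    fderiv_coef_mul θ1 θ2 hθ1 hθ2 _ _ p _ _ (hcos p.2) (hsin p.2) w u
  have key2 : ∀ (w : E) (u : E × ℝ),
      fderiv ℝ (fun q : E × ℝ =>
        -Real.sin (2 * m * q.2) * θ1 q.1 w + Real.cos (2 * m * q.2) * θ2 q.1 w) p u =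
      -Real.sin (2 * m * p.2) * fderiv ℝ (fun x => θ1 x w) p.1 u.1
      + Real.cos (2 * m * p.2) * fderiv ℝ (fun x => θ2 x w) p.1 u.1
      + (-(Real.cos (2 * m * p.2) * (2 * m))) * u.2 * θ1 p.1 w
      + (-Real.sin (2 * m * p.2) * (2 * m)) * u.2 * θ2 p.1 w := fun w u =>
    fderiv_coef_mul θ1 θ2 hθ1 hθ2 _ _ p _ _ (hnsin p.2) (hcos p.2) w u
  have keyf1 : ∀ (w : E) (u : E × ℝ),
      fderiv ℝ (fun q : E × ℝ => θ1 q.1 w) p u = fderiv ℝ (fun x => θ1 x w) p.1 u.1 := by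
    intro w u
    have h : HasFDerivAt (fun q : E × ℝ => θ1 q.1 w)
        ((fderiv ℝ (fun x => θ1 x w) p.1).comp (ContinuousLinearMap.fst ℝ E ℝ)) p :=
      ((hθ1 w p.1).hasFDerivAt).comp p hasFDerivAt_fst
    rw [h.fderiv]; simp
  have keyf2 : ∀ (w : E) (u : E × ℝ),
      fderiv ℝ (fun q : E × ℝ => θ2 q.1 w) p u = fderiv ℝ (fun x => θ2 x w) p.1 u.1 := by
    intro w u
    have h : HasFDerivAt (fun q : E × ℝ => θ2 q.1 w)
        ((fderiv ℝ (fun x => θ2 x w) p.1).comp (ContinuousLinearMap.fst ℝ E ℝ)) p :=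
      ((hθ2 w p.1).hasFDerivAt).comp p hasFDerivAt_fst
    rw [h.fderiv]; simp
  have hdet : w3 Θ1 Θ2 Θ4 p v0 v1 v2 =
      θ1 p.1 v0.1 * (θ2 p.1 v1.1 * v2.2 - θ2 p.1 v2.1 * v1.2)
      - θ1 p.1 v1.1 * (θ2 p.1 v0.1 * v2.2 - θ2 p.1 v2.1 * v0.2)
      + θ1 p.1 v2.1 * (θ2 p.1 v0.1 * v1.2 - θ2 p.1 v1.1 * v0.2) := by
    rw [hw3]
    simp [Matrix.det_fin_three, hΘ1, hΘ2, hΘ4]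
    ring
  simp only [hw12, hdet, hd1, hΘ1, hΘ2, hΘ4, hb1, hb2, key1, key2, keyf1, keyf2]
  have hcs : Real.cos (2 * m * p.2) ^ 2 + Real.sin (2 * m * p.2) ^ 2 = 1 :=
    Real.cos_sq_add_sin_sq (2 * m * p.2)
  linear_combination (θ1 p.1 v0.1 * (fderiv ℝ (fun x => θ1 x v2.1) p.1 v1.1 - fderiv ℝ (fun x => θ1 x v1.1) p.1 v2.1) - θ1 p.1 v1.1 * (fderiv ℝ (fun x => θ1 x v2.1) p.1 v0.1 - fderiv ℝ (fun x => θ1 x v0.1) p.1 v2.1) + θ1 p.1 v2.1 * (fderiv ℝ (fun x => θ1 x v1.1) p.1 v0.1 - fderiv ℝ (fun x => θ1 x v0.1) p.1 v1.1) + θ2 p.1 v0.1 * (fderiv ℝ (fun x => θ2 x v2.1) p.1 v1.1 - fderiv ℝ (fun x => θ2 x v1.1) p.1 v2.1) - θ2 p.1 v1.1 * (fderiv ℝ (fun x => θ2 x v2.1) p.1 v0.1 - fderiv ℝ (fun x => θ2 x v0.1) p.1 v2.1) + θ2 p.1 v2.1 * (fderiv ℝ (fun x => θ2 x v1.1) p.1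 v0.1 - fderiv ℝ (fun x => θ2 x v0.1) p.1 v1.1) - 4 * m * (θ1 p.1 v0.1 * (θ2 p.1 v1.1 * v2.2 - θ2 p.1 v2.1 * v1.2) - θ1 p.1 v1.1 * (θ2 p.1 v0.1 * v2.2 - θ2 p.1 v2.1 * v0.2) + θ1 p.1 v2.1 * (θ2 p.1 v0.1 * v1.2 - θ2 p.1 v1.1 * v0.2))) * hcs
end

section
/- Let α, β be real 1-forms on a smooth manifold and φ a smooth real function, and set α' + iβ' = (α + iβ)e^{iφ}. Then α'∧dα' + β'∧dβ' = α∧dα + β∧dβ + 2 α∧β∧dφ. In particular, if dφ = 0 locally (φ locally constant), then α'∧dα' + β'∧dβ' = α∧dα + β∧dβ. -/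
/-!
Differentiating `α' = cos φ · α - sin φ · β` and `β' = sin φ · α + cos φ · β` gives
`dα' = cos φ · dα - sin φ · dβ - dφ ∧ β'` and `dβ' = sin φ · dα + cos φ · dβ + dφ ∧ α'`.
Substituting, the terms without `dφ` reassemble to `(cos² φ + sin² φ)(α ∧ dα + β ∧ dβ)`,
while the two `dφ`-terms `-α' ∧ dφ ∧ β' + β' ∧ dφ ∧ α'` equal `2 α' ∧ β' ∧ dφ`, which is
`2 α ∧ β ∧ dφ` since the rotation has determinant one.
-/

open Real

section Wedge

variable {R V : Type*} [CommRing R]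

def wedge11 (p q : V → R) (u v : V) : R := p u * q v - p v * q u

def wedge12 (γ : V → R) (ω : V → V → R) (v0 v1 v2 : V) : R :=
  γ v0 * ω v1 v2 - γ v1 * ω v0 v2 + γ v2 * ω v0 v1

theorem wedge12_add_wedge12_of_rotation {a b a' b' p : V → R} {A B A' B' : V → V → R} {c s : R}
    (hcs : c ^ 2 + s ^ 2 = 1)
    (ha' : ∀ v, a' v = c * a v - s * b v) (hb' : ∀ v, b' v = s * a v + c * b v)
    (hA' : ∀ u v, A' u v = c * A u v - s * B u v - wedge11 p b' u v)
    (hB' : ∀ u v, B' u v = s * A u v + c * B u v + wedge11 p a' u v) (v0 v1 v2 : V) :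
    wedge12 a' A' v0 v1 v2 + wedge12 b' B' v0 v1 v2 =
      wedge12 a A v0 v1 v2 + wedge12 b B v0 v1 v2
        + 2 * !![a v0, a v1, a v2; b v0, b v1, b v2; p v0, p v1, p v2].det := by
  have homogeneous : wedge12 a' A' v0 v1 v2 + wedge12 b' B' v0 v1 v2 =
      (c ^ 2 + s ^ 2) * (wedge12 a A v0 v1 v2 + wedge12 b B v0 v1 v2
        + 2 * !![a v0, a v1, a v2; b v0, b v1, b v2; p v0, p v1, p v2].det) := by
    rw [Matrix.det_fin_three]
    simp only [wedge12, hA', hB', wedge11, ha', hb', Matrix.of_apply, Matrix.cons_val',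
      Matrix.cons_val_zero, Matrix.cons_val_one, Matrix.cons_val, Matrix.cons_val_fin_one]
    ring
  rw [homogeneous, hcs, one_mul]

end Wedge

section RotationDerivative

variable {E : Type*} [NormedAddCommGroup E] [NormedSpace ℝ E] {f g φ : E → ℝ} {x : E}

theorem fderiv_cos_mul_sub_sin_mul_apply (hf : DifferentiableAt ℝ f x)
    (hg : DifferentiableAt ℝ g x) (hφ : DifferentiableAt ℝ φ x) (u : E) :
    fderiv ℝ (fun y => cos (φ y) * f y - sin (φ y) * g y) x u =
      cos (φ x) * fderiv ℝ f x u - sin (φ x) * fderiv ℝ g x u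
        - fderiv ℝ φ x u * (sin (φ x) * f x + cos (φ x) * g x) := by
  have h : HasFDerivAt (fun y => cos (φ y) * f y - sin (φ y) * g y) _ x :=
    (hφ.hasFDerivAt.cos.mul hf.hasFDerivAt).sub (hφ.hasFDerivAt.sin.mul hg.hasFDerivAt)
  rw [h.fderiv]
  simp only [sub_apply, add_apply, smul_apply, smul_eq_mul]
  ring

theorem fderiv_sin_mul_add_cos_mul_apply (hf : DifferentiableAt ℝ f x)
    (hg : DifferentiableAt ℝ g x) (hφ : DifferentiableAt ℝ φ x) (u : E) :
    fderiv ℝ (fun y => sin (φ y) * f y + cos (φ y) * g y) x u =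
      sin (φ x) * fderiv ℝ f x u + cos (φ x) * fderiv ℝ g x u
        + fderiv ℝ φ x u * (cos (φ x) * f x - sin (φ x) * g x) := by
  have h : HasFDerivAt (fun y => sin (φ y) * f y + cos (φ y) * g y) _ x :=
    (hφ.hasFDerivAt.sin.mul hf.hasFDerivAt).add (hφ.hasFDerivAt.cos.mul hg.hasFDerivAt)
  rw [h.fderiv]
  simp only [add_apply, smul_apply, smul_eq_mul]
  ring

end RotationDerivative

/-- Pointwise rotation of a pair of 1-forms by angle φ:
α'∧dα' + β'∧dβ' = α∧dα + β∧dβ + 2α∧β∧dφ; in particular if dφ = 0 the combination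
is unchanged. -/
theorem rotated_pair_axial_identity
    {E : Type*} [NormedAddCommGroup E] [NormedSpace ℝ E]
    (α β : E → E → ℝ) (φ : E → ℝ)
    (hα : ∀ v, Differentiable ℝ (fun x => α x v))
    (hβ : ∀ v, Differentiable ℝ (fun x => β x v))
    (hφ : Differentiable ℝ φ)
    (α' β' : E → E → ℝ)
    (hα' : ∀ x v, α' x v = Real.cos (φ x) * α x v - Real.sin (φ x) * β x v)
    (hβ' : ∀ x v, β' x v = Real.sin (φ x) * α x v + Real.cos (φ x) * β x v)
    (dφ : E → E → ℝ) (hdφ : ∀ x v, dφ x v = fderiv ℝ φ x v)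
    (d1 : (E → E → ℝ) → E → E → E → ℝ)
    (hd1 : ∀ γ x u v, d1 γ x u v =
      fderiv ℝ (fun y => γ y v) x u - fderiv ℝ (fun y => γ y u) x v)
    (w12 : (E → E → ℝ) → (E → E → E → ℝ) → E → E → E → E → ℝ)
    (hw12 : ∀ γ ω x v0 v1 v2, w12 γ ω x v0 v1 v2 =
      γ x v0 * ω x v1 v2 - γ x v1 * ω x v0 v2 + γ x v2 * ω x v0 v1)
    (w3 : (E → E → ℝ) → (E → E → ℝ) → (E → E → ℝ) → E → E → E → E → ℝ)
    (hw3 : ∀ γ δ ε x v0 v1 v2, w3 γ δ ε x v0 v1 v2 = Matrix.det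
      !![γ x v0, γ x v1, γ x v2; δ x v0, δ x v1, δ x v2; ε x v0, ε x v1, ε x v2]) :
    (∀ x v0 v1 v2,
      w12 α' (d1 α') x v0 v1 v2 + w12 β' (d1 β') x v0 v1 v2 =
      w12 α (d1 α) x v0 v1 v2 + w12 β (d1 β) x v0 v1 v2
        + 2 * w3 α β dφ x v0 v1 v2) ∧
    (∀ x v0 v1 v2, fderiv ℝ φ x = 0 →
      w12 α' (d1 α') x v0 v1 v2 + w12 β' (d1 β') x v0 v1 v2 =
      w12 α (d1 α) x v0 v1 v2 + w12 β (d1 β) x v0 v1 v2) := by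
  have hdα' : ∀ x u v, d1 α' x u v =
      cos (φ x) * d1 α x u v - sin (φ x) * d1 β x u v - wedge11 (dφ x) (β' x) u v := by
    intro x u v
    simp only [hd1, hα', hβ', hdφ, wedge11,
      fderiv_cos_mul_sub_sin_mul_apply (hα _ x) (hβ _ x) (hφ x)]
    ring
  have hdβ' : ∀ x u v, d1 β' x u v =
      sin (φ x) * d1 α x u v + cos (φ x) * d1 β x u v + wedge11 (dφ x) (α' x) u v := by
    intro x u v
    simp only [hd1, hα', hβ', hdφ, wedge11,
      fderiv_sin_mul_add_cos_mul_apply (hα _ x) (hβ _ x) (hφ x)]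
    ring
  have axial : ∀ x v0 v1 v2,
      w12 α' (d1 α') x v0 v1 v2 + w12 β' (d1 β') x v0 v1 v2 =
      w12 α (d1 α) x v0 v1 v2 + w12 β (d1 β) x v0 v1 v2 + 2 * w3 α β dφ x v0 v1 v2 := by
    intro x v0 v1 v2
    have hw : ∀ γ ω, w12 γ ω x v0 v1 v2 = wedge12 (γ x) (ω x) v0 v1 v2 :=
      fun γ ω => hw12 γ ω x v0 v1 v2
    rw [hw, hw, hw, hw, hw3]
    exact wedge12_add_wedge12_of_rotation (cos_sq_add_sin_sq _) (hα' x) (hβ' x) (hdα' x)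
      (hdβ' x) v0 v1 v2
  refine ⟨axial, fun x v0 v1 v2 hconst => ?_⟩
  have hdφ_row : ∀ j, ![dφ x v0, dφ x v1, dφ x v2] j = 0 := fun j => by
    fin_cases j <;> simp [hdφ, hconst]
  rw [axial, hw3, Matrix.det_eq_zero_of_row_eq_zero 2 hdφ_row, mul_zero, add_zero]
end
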